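/- arXiv:2509.22875 — 6 statements merged into one kernel-verified Lean document; each statement's English description precedes it below -/
import Mathlib

section
/- Let A be a real vector space and μ : A × A → A a bilinear map that is a KV-structure (i.e. its KV-anomaly vanishes identically). Then μ is a Poisson structure (skew-symmetric, satisfying the Jacobi identity and the Leibniz rule) if and only if μ is skew-symmetric and μ(w, μ(u,v)) = 0 for all u, v, w ∈ A. -/
/-!
Under skew-symmetry the KV-anomaly and the Jacobiator of `(a, b, c)` add up to `μ (μ a b) c`.
So for a skew-symmetric KV-structure the Jacobi identity forces all double products to vanish,
and these in turn make Jacobi and Leibniz hold trivially.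
-/

section

variable {R A : Type*} [CommRing R] [AddCommGroup A] [Module R A]

theorem kvAnomaly_add_jacobiator_of_skew (μ : A →ₗ[R] A →ₗ[R] A)
    (hs : ∀ a b : A, μ a b = -μ b a) (a b c : A) :
    (μ (μ a b) c - μ a (μ b c) - μ (μ b a) c + μ b (μ a c)) +
      (μ a (μ b c) + μ b (μ c a) + μ c (μ a b)) = μ (μ a b) c := by
  rw [hs b a, hs c a, hs c (μ a b)]
  simp only [map_neg, LinearMap.neg_apply]
  abel

end

/-- For a bilinear map `μ` on a real vector space `A` with vanishing
KV-anomaly, `μ` is a Poisson structure (skew-symmetric + Jacobi + Leibniz) iff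
`μ` is skew-symmetric and `μ w (μ u v) = 0` for all `u v w`. -/
theorem kv_poisson_characterization
    {A : Type*} [AddCommGroup A] [Module ℝ A]
    (μ : A →ₗ[ℝ] A →ₗ[ℝ] A)
    (hKV : ∀ a b c : A,
      μ (μ a b) c - μ a (μ b c) - μ (μ b a) c + μ b (μ a c) = 0) :
    ((∀ a b : A, μ a b = -μ b a) ∧
     (∀ a b c : A, μ a (μ b c) + μ b (μ c a) + μ c (μ a b) = 0) ∧
     (∀ a b c : A, μ (μ a b) c = μ a (μ b c) + μ b (μ a c)))
    ↔
    ((∀ a b : A, μ a b = -μ b a) ∧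
     (∀ u v w : A, μ w (μ u v) = 0)) := by
  constructor
  · rintro ⟨hs, hj, -⟩
    refine ⟨hs, fun u v w => ?_⟩
    rw [hs, ← kvAnomaly_add_jacobiator_of_skew μ hs, hKV, hj, add_zero, neg_zero]
  · rintro ⟨hs, hz⟩
    have hz' : ∀ a b c : A, μ (μ a b) c = 0 := fun a b c => by rw [hs, hz, neg_zero]
    exact ⟨hs, fun a b c => by simp only [hz, add_zero],
      fun a b c => by simp only [hz', hz, add_zero]⟩
end

section
/- Let A be a real vector space and μ : A × A → A a bilinear map with vanishing KV-anomaly that is skew-symmetric and satisfies the Jacobi identity and the Leibniz rule. Then for all u, v, w ∈ A one has μ(w, μ(u,v)) = 0. -/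
/-!
Skew-symmetry turns `μ (μ b a) c` into `-μ (μ a b) c`, and the Leibniz rule then collapses the
KV-anomaly of `(a, b, c)` to `μ a (μ b c) + 3 μ b (μ a c)`. Its vanishing for `(a, b, c)` and for
`(b, a, c)` is a linear system with determinant `1 - 9 = -8`, so `8 μ a (μ b c) = 0`.
-/

section

variable {R M : Type*} [CommRing R] [AddCommGroup M] [Module R M] (μ : M →ₗ[R] M →ₗ[R] M)
  (hKV : ∀ a b c : M, μ (μ a b) c - μ a (μ b c) - μ (μ b a) c + μ b (μ a c) = 0)
  (hskew : ∀ a b : M, μ a b = -μ b a)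
  (hleibniz : ∀ a b c : M, μ (μ a b) c = μ a (μ b c) + μ b (μ a c))
include hKV hskew hleibniz

theorem apply_apply_add_three_smul_eq_zero (a b c : M) :
    μ a (μ b c) + (3 : R) • μ b (μ a c) = 0 := by
  have h := hKV a b c
  rw [hskew b a, map_neg, LinearMap.neg_apply, hleibniz] at h
  calc μ a (μ b c) + (3 : R) • μ b (μ a c)
      = (μ a (μ b c) + μ b (μ a c)) - μ a (μ b c)
          - -(μ a (μ b c) + μ b (μ a c)) + μ b (μ a c) := by module
    _ = 0 := h

theorem eight_smul_apply_apply_eq_zero (a b c : M) : (8 : R) • μ a (μ b c) = 0 := by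
  have hab := apply_apply_add_three_smul_eq_zero μ hKV hskew hleibniz a b c
  have hba := apply_apply_add_three_smul_eq_zero μ hKV hskew hleibniz b a c
  calc (8 : R) • μ a (μ b c)
      = (3 : R) • (μ b (μ a c) + (3 : R) • μ a (μ b c))
          - (μ a (μ b c) + (3 : R) • μ b (μ a c)) := by module
    _ = 0 := by rw [hab, hba, smul_zero, sub_zero]

end

theorem kv_poisson_necessary_general
    {A : Type*} [AddCommGroup A] [Module ℝ A]
    (μ : A →ₗ[ℝ] A →ₗ[ℝ] A)
    (hKV : ∀ a b c : A,
      μ (μ a b) c - μ a (μ b c) - μ (μ b a) c + μ b (μ a c) = 0)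
    (hskew : ∀ a b : A, μ a b = -μ b a)
    (hleibniz : ∀ a b c : A, μ (μ a b) c = μ a (μ b c) + μ b (μ a c)) :
    ∀ u v w : A, μ w (μ u v) = 0 := fun u v w =>
  (smul_eq_zero.mp (eight_smul_apply_apply_eq_zero μ hKV hskew hleibniz w u v)).resolve_left
    (by norm_num)

/-- If a bilinear map `μ` on a real vector space has vanishing
KV-anomaly, is skew-symmetric, and satisfies the Jacobi identity and the
Leibniz rule, then `μ w (μ u v) = 0` for all `u v w`. -/
theorem kv_poisson_necessary
    {A : Type*} [AddCommGroup A] [Module ℝ A]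
    (μ : A →ₗ[ℝ] A →ₗ[ℝ] A)
    (hKV : ∀ a b c : A,
      μ (μ a b) c - μ a (μ b c) - μ (μ b a) c + μ b (μ a c) = 0)
    (hskew : ∀ a b : A, μ a b = -μ b a)
    (hjacobi : ∀ a b c : A, μ a (μ b c) + μ b (μ c a) + μ c (μ a b) = 0)
    (hleibniz : ∀ a b c : A, μ (μ a b) c = μ a (μ b c) + μ b (μ a c)) :
    ∀ u v w : A, μ w (μ u v) = 0 :=
  kv_poisson_necessary_general μ hKV hskew hleibniz
end

section
/- Fix x₀, y₀ ∈ ℝ with x₀ ≠ 0 and y₀ = 0, and let μ_P((x,y),(x′,y′)) = ((xy′ − x′y)x₀, (xy′ − x′y)y₀). A linear map f : ℝ² → ℝ², f(x,y) = (αx + βy, γx + λy), satisfies δ¹f = 0 if and only if γ = λ = 0; that is, ker δ¹ is the two-dimensional space of linear maps whose second component vanishes. -/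
/-!
Writing `μ_P u v = det(u, v) • p` with `p = (x₀, y₀)`, the identity
`det(u, f v) + det(f u, v) = tr f · det(u, v)` turns the cocycle into
`δ¹f (u, v) = det(u, v) • (tr f • p - f p)`. Hence `δ¹f = 0` exactly when `f p = tr f • p`,
and for `p = (x₀, 0)` with `x₀ ≠ 0` this says `γ = λ = 0`.
-/

namespace KerDelta1

variable {R : Type*} [CommRing R]

def det (u v : R × R) : R := u.1 * v.2 - v.1 * u.2

def mu (p : R × R) (u v : R × R) : R × R := det u v • p

def delta1 (μ : R × R → R × R → R × R) (f : R × R →ₗ[R] R × R) (u v : R × R) : R × R :=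
  μ u (f v) - μ v (f u) - f (μ u v)

section

variable {α β γ lam : R} {f : R × R →ₗ[R] R × R}

theorem apply_eq (hf : ∀ x y, f (x, y) = (α * x + β * y, γ * x + lam * y)) (u : R × R) :
    f u = (α * u.1 + β * u.2, γ * u.1 + lam * u.2) :=
  hf u.1 u.2

theorem det_apply_sub_det_apply (hf : ∀ x y, f (x, y) = (α * x + β * y, γ * x + lam * y))
    (u v : R × R) : det u (f v) - det v (f u) = (α + lam) * det u v := by
  simp only [det, apply_eq hf]
  ring

theorem delta1_mu (hf : ∀ x y, f (x, y) = (α * x + β * y, γ * x + lam * y))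
    (p u v : R × R) : delta1 (mu p) f u v = det u v • ((α + lam) • p - f p) := by
  simp only [delta1, mu, map_smul, ← sub_smul, det_apply_sub_det_apply hf]
  rw [smul_sub, smul_smul, mul_comm (det u v)]

theorem delta1_mu_eq_zero_iff (hf : ∀ x y, f (x, y) = (α * x + β * y, γ * x + lam * y))
    (p : R × R) : (∀ u v, delta1 (mu p) f u v = 0) ↔ f p = (α + lam) • p := by
  constructor
  · intro h
    have hdet : det ((1, 0) : R × R) (0, 1) = 1 := by simp [det]
    have := h (1, 0) (0, 1)
    rwa [delta1_mu hf, hdet, one_smul, sub_eq_zero, eq_comm] at this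
  · intro h u v
    rw [delta1_mu hf, h, sub_self, smul_zero]

theorem apply_eq_smul_iff [NoZeroDivisors R]
    (hf : ∀ x y, f (x, y) = (α * x + β * y, γ * x + lam * y)) {x₀ : R} (hx₀ : x₀ ≠ 0) :
    f (x₀, 0) = (α + lam) • (x₀, 0) ↔ γ = 0 ∧ lam = 0 := by
  have hl : α * x₀ = (α + lam) * x₀ ↔ lam = 0 := by
    rw [add_mul, left_eq_add, mul_eq_zero, or_iff_left hx₀]
  simp [hf, Prod.ext_iff, mul_eq_zero, hx₀, hl, and_comm]

theorem forall_snd_eq_zero_iff (hf : ∀ x y, f (x, y) = (α * x + β * y, γ * x + lam * y)) :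
    (∀ u, (f u).2 = 0) ↔ γ = 0 ∧ lam = 0 := by
  constructor
  · intro h
    simpa [hf] using And.intro (h (1, 0)) (h (0, 1))
  · rintro ⟨rfl, rfl⟩ u
    simp [apply_eq hf]

end

end KerDelta1

open KerDelta1 in
/-- For `x₀ ≠ 0`, `y₀ = 0` and
`μ_P (x,y) (x',y') = ((x*y'-x'*y)*x₀, (x*y'-x'*y)*y₀)`, a linear map
`f (x,y) = (α*x + β*y, γ*x + λ*y)` satisfies `δ¹f = 0` iff `γ = λ = 0`,
i.e. iff the second component of `f` vanishes. -/
theorem ker_delta1_case (x₀ y₀ α β γ lam : ℝ)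
    (hx₀ : x₀ ≠ 0) (hy₀ : y₀ = 0)
    (μP : ℝ × ℝ → ℝ × ℝ → ℝ × ℝ)
    (hμ : ∀ u v : ℝ × ℝ,
      μP u v = ((u.1 * v.2 - v.1 * u.2) * x₀, (u.1 * v.2 - v.1 * u.2) * y₀))
    (f : (ℝ × ℝ) →ₗ[ℝ] (ℝ × ℝ))
    (hf : ∀ x y : ℝ, f (x, y) = (α * x + β * y, γ * x + lam * y)) :
    ((∀ u v : ℝ × ℝ, μP u (f v) - μP v (f u) - f (μP u v) = 0)
      ↔ (γ = 0 ∧ lam = 0)) ∧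
    ((∀ u v : ℝ × ℝ, μP u (f v) - μP v (f u) - f (μP u v) = 0)
      ↔ (∀ u : ℝ × ℝ, (f u).2 = 0)) := by
  subst hy₀
  have hμP : μP = mu (x₀, 0) := by
    funext u v
    simp [hμ, mu, det]
  have key : (∀ u v : ℝ × ℝ, μP u (f v) - μP v (f u) - f (μP u v) = 0) ↔ γ = 0 ∧ lam = 0 := by
    rw [hμP]
    exact (delta1_mu_eq_zero_iff hf _).trans (apply_eq_smul_iff hf hx₀)
  exact ⟨key, key.trans (forall_snd_eq_zero_iff hf).symm⟩
end

section
/- Fix x₀, y₀ ∈ ℝ with x₀ ≠ 0, and let μ_P((x,y),(x′,y′)) = ((xy′ − x′y)x₀, (xy′ − x′y)y₀). Then every linear map f : ℝ² → ℝ² with δ¹f = 0 lies in the image of δ⁰: there exists ξ ∈ ℝ² such that f(u) = μ_P(u,ξ) for all u ∈ ℝ². In other words, the first KV-Poisson cohomology group H¹_P(μ_P) = ker δ¹ / im δ⁰ is trivial. -/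
/-!
Write `μ_P(u, v) = det(u, v) • p` with `p = (x₀, y₀) ≠ 0`, and complete `p` to a basis `(p, q)` with
`det(p, q) = 1`, so that every `v` equals `det(v, q) • p + det(p, v) • q`. Pairing the cocycle
identity at `(p, q)` with `det(p, ·)` and with `det(·, q)` shows that `f p` and `f q` are both
multiples of `p`, say `a • p` and `c • p`. Expanding `f u` in the basis then gives
`f u = det(u, a • q - c • p) • p`.
-/

variable {K : Type*} [Field K]

def det₂ : K × K →ₗ[K] K × K →ₗ[K] K :=
  LinearMap.mk₂ K (fun u v => u.1 * v.2 - v.1 * u.2)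
    (fun _ _ _ => by simp only [Prod.fst_add, Prod.snd_add]; ring)
    (fun _ _ _ => by simp only [Prod.smul_fst, Prod.smul_snd, smul_eq_mul]; ring)
    (fun _ _ _ => by simp only [Prod.fst_add, Prod.snd_add]; ring)
    (fun _ _ _ => by simp only [Prod.smul_fst, Prod.smul_snd, smul_eq_mul]; ring)

theorem det₂_apply (u v : K × K) : det₂ u v = u.1 * v.2 - v.1 * u.2 := rfl

@[simp]
theorem det₂_self (u : K × K) : det₂ u u = 0 := by
  simp only [det₂_apply, sub_self]

theorem det₂_swap (u v : K × K) : det₂ v u = -det₂ u v := by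
  simp only [det₂_apply]; ring

theorem exists_det₂_eq_one {p : K × K} (hp : p ≠ 0) : ∃ q, det₂ p q = 1 := by
  by_cases h₁ : p.1 = 0
  · have h₂ : p.2 ≠ 0 := fun h₂ => hp (Prod.ext h₁ h₂)
    exact ⟨(-p.2⁻¹, 0), by simp [det₂_apply, h₂]⟩
  · exact ⟨(0, p.1⁻¹), by simp [det₂_apply, h₁]⟩

theorem det₂_smul_add_det₂_smul {p q : K × K} (hpq : det₂ p q = 1) (v : K × K) :
    det₂ v q • p + det₂ p v • q = v := by
  simp only [det₂_apply] at hpq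
  ext
  · simp only [det₂_apply, Prod.fst_add, Prod.smul_fst, smul_eq_mul]
    linear_combination v.1 * hpq
  · simp only [det₂_apply, Prod.snd_add, Prod.smul_snd, smul_eq_mul]
    linear_combination v.2 * hpq

theorem eq_det₂_smul_of_det₂_eq_zero {p q v : K × K} (hpq : det₂ p q = 1) (hv : det₂ p v = 0) :
    v = det₂ v q • p := by
  simpa [hv] using (det₂_smul_add_det₂_smul hpq v).symm

/-- `δ¹ f = 0` for the product `μ_P(u, v) = det₂ u v • p`. -/
def IsCocycle (p : K × K) (f : K × K →ₗ[K] K × K) : Prop :=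
  ∀ u v, det₂ u (f v) • p - det₂ v (f u) • p - f (det₂ u v • p) = 0

theorem map_basis_eq_smul_of_isCocycle {p q : K × K} (hpq : det₂ p q = 1) {f : K × K →ₗ[K] K × K}
    (hf : IsCocycle p f) :
    (∃ a : K, f p = a • p) ∧ ∃ c : K, f q = c • p := by
  have h := hf p q
  rw [hpq, one_smul] at h
  have hp : det₂ p (f p) = 0 := by
    simpa using congrArg (det₂ p) h
  have hq : det₂ p (f q) = 0 := by
    simpa [hpq, det₂_swap q (f p)] using congrArg (det₂.flip q) h
  exact ⟨⟨_, eq_det₂_smul_of_det₂_eq_zero hpq hp⟩, ⟨_, eq_det₂_smul_of_det₂_eq_zero hpq hq⟩⟩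

theorem exists_eq_det₂_smul_of_isCocycle {p : K × K} (hp : p ≠ 0) {f : K × K →ₗ[K] K × K}
    (hf : IsCocycle p f) :
    ∃ ξ, ∀ u, f u = det₂ u ξ • p := by
  obtain ⟨q, hpq⟩ := exists_det₂_eq_one hp
  obtain ⟨⟨a, hfp⟩, ⟨c, hfq⟩⟩ := map_basis_eq_smul_of_isCocycle hpq hf
  refine ⟨a • q - c • p, fun u => ?_⟩
  calc f u = f (det₂ u q • p + det₂ p u • q) := by rw [det₂_smul_add_det₂_smul hpq]
    _ = (a * det₂ u q + c * det₂ p u) • p := by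
      rw [map_add, map_smul, map_smul, hfp, hfq, smul_smul, smul_smul, add_smul, mul_comm a,
        mul_comm c]
    _ = det₂ u (a • q - c • p) • p := by
      rw [map_sub, map_smul, map_smul, det₂_swap p u, smul_eq_mul, smul_eq_mul]
      congr 1
      ring

/-- For `x₀ ≠ 0` and
`μ_P (x,y) (x',y') = ((x*y'-x'*y)*x₀, (x*y'-x'*y)*y₀)`, every linear map
`f : ℝ² → ℝ²` with `δ¹f = 0` is of the form `f = δ⁰ξ`, i.e.
`f u = μ_P u ξ` for some `ξ`: the first cohomology group
`H¹_P(μ_P) = ker δ¹ / im δ⁰` is trivial. -/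
theorem H1_trivial (x₀ y₀ : ℝ) (hx₀ : x₀ ≠ 0)
    (μP : ℝ × ℝ → ℝ × ℝ → ℝ × ℝ)
    (hμ : ∀ u v : ℝ × ℝ,
      μP u v = ((u.1 * v.2 - v.1 * u.2) * x₀, (u.1 * v.2 - v.1 * u.2) * y₀)) :
    ∀ f : (ℝ × ℝ) →ₗ[ℝ] (ℝ × ℝ),
      (∀ u v : ℝ × ℝ, μP u (f v) - μP v (f u) - f (μP u v) = 0) →
      ∃ ξ : ℝ × ℝ, ∀ u : ℝ × ℝ, f u = μP u ξ := by
  have hμ_det₂ : ∀ u v, μP u v = det₂ u v • (x₀, y₀) := fun u v => by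
    rw [hμ, Prod.smul_mk, det₂_apply, smul_eq_mul, smul_eq_mul]
  have hp : ((x₀, y₀) : ℝ × ℝ) ≠ 0 := fun h => hx₀ (congrArg Prod.fst h)
  simp only [hμ_det₂]
  exact fun f hf => exists_eq_det₂_smul_of_isCocycle hp hf
end

section
/- Fix x₀, y₀ ∈ ℝ and let μ_P((x,y),(x′,y′)) = ((xy′ − x′y)x₀, (xy′ − x′y)y₀). Then for every alternating bilinear map f : ℝ² × ℝ² → ℝ² and all u, v, w ∈ ℝ², (δ²f)(u,v,w) = μ_P(u,f(v,w)) − μ_P(v,f(u,w)) + μ_P(w,f(u,v)) − f(μ_P(u,v),w) − f(μ_P(v,w),u) + f(μ_P(u,w),v) = 0. In particular ker δ² = χ²(ℝ²), the whole space of alternating bilinear maps ℝ² × ℝ² → ℝ². -/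
/-!
On `ℝ²` every alternating bilinear map is `f a b = det(a, b) • c` with `c = f e₁ e₂`, and
`μ_P a b = det(a, b) • P` with `P = (x₀, y₀)`. Substituting both, `δ²f(u, v, w)` is a combination
of `P` and `c` whose coefficients are the identity `det(v,w) u - det(u,w) v + det(u,v) w = 0`
paired with `c` or with `P`, so it vanishes identically (a polynomial identity, closed by `ring`).
-/

theorem LinearMap.IsAlt.apply_eq_det_smul {R M : Type*} [CommRing R]
    [AddCommGroup M] [Module R M] {f : R × R →ₗ[R] R × R →ₗ[R] M}
    (hf : f.IsAlt) (a b : R × R) :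
    f a b = (a.1 * b.2 - a.2 * b.1) • f (1, 0) (0, 1) := by
  have hanti : f (0, 1) (1, 0) = -f (1, 0) (0, 1) := (hf.neg _ _).symm
  have hbasis : ∀ x : R × R, x = x.1 • ((1, 0) : R × R) + x.2 • ((0, 1) : R × R) := fun x ↦
    Prod.ext (by simp) (by simp)
  conv_lhs => rw [hbasis a, hbasis b]
  simp only [map_add, map_smul, LinearMap.add_apply, LinearMap.smul_apply, hf.self_eq_zero,
    hanti, smul_zero, add_zero, zero_add]
  module

/-- For `μ_P (x,y) (x',y') = ((x*y'-x'*y)*x₀, (x*y'-x'*y)*y₀)`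
and every alternating bilinear map `f : ℝ² × ℝ² → ℝ²`, one has
`(δ²f)(u,v,w) = 0` for all `u v w`: `ker δ² = χ²(ℝ²)`. -/
theorem delta2_vanishes (x₀ y₀ : ℝ)
    (μP : ℝ × ℝ → ℝ × ℝ → ℝ × ℝ)
    (hμ : ∀ u v : ℝ × ℝ,
      μP u v = ((u.1 * v.2 - v.1 * u.2) * x₀, (u.1 * v.2 - v.1 * u.2) * y₀)) :
    ∀ f : (ℝ × ℝ) →ₗ[ℝ] (ℝ × ℝ) →ₗ[ℝ] (ℝ × ℝ),
      (∀ u : ℝ × ℝ, f u u = 0) →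
      ∀ u v w : ℝ × ℝ,
        μP u (f v w) - μP v (f u w) + μP w (f u v)
          - f (μP u v) w - f (μP v w) u + f (μP u w) v = 0 := by
  intro f hf u v w
  obtain ⟨c, hc⟩ : ∃ c, ∀ a b : ℝ × ℝ, f a b = (a.1 * b.2 - a.2 * b.1) • c :=
    ⟨_, LinearMap.IsAlt.apply_eq_det_smul hf⟩
  simp only [hμ, hc]
  ext <;> simp only [Prod.smul_fst, Prod.smul_snd, smul_eq_mul, Prod.mk_sub_mk, Prod.mk_add_mk,
    Prod.fst_add, Prod.fst_sub, Prod.fst_zero, Prod.snd_add, Prod.snd_sub, Prod.snd_zero] <;> ring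
end

section
/- Fix x₀, y₀ ∈ ℝ with x₀ ≠ 0, and let μ_P((x,y),(x′,y′)) = ((xy′ − x′y)x₀, (xy′ − x′y)y₀). Then every alternating bilinear map g : ℝ² × ℝ² → ℝ² is in the image of δ¹: there exists a linear map f : ℝ² → ℝ² with g(u,v) = μ_P(u,f(v)) − μ_P(v,f(u)) − f(μ_P(u,v)) for all u, v ∈ ℝ². Consequently the second KV-Poisson cohomology group H²_P(μ_P) = ker δ² / im δ¹ is trivial. -/
/-!
Writing `wedge u v = u.1 * v.2 - v.1 * u.2`, we have `μ_P u v = wedge u v • w` with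
`w = (x₀, y₀) ≠ 0`, and every alternating bilinear `g` equals `wedge u v • c` with
`c = g e₁ e₂`. Since `wedge u (f v) + wedge (f u) v = tr f * wedge u v` in dimension two,
`δ¹f u v = wedge u v • (tr f • w - f w)`, so it suffices to solve `tr f • w - f w = c`. The map
`f ↦ tr f • id - f` is the adjugate on 2 × 2 matrices and is an involution, so any `f = adj A`
with `A w = c` works.
-/

open LinearMap

def coboundary {R M : Type*} [CommRing R] [AddCommGroup M] [Module R M] (μ : M → M → M)
    (f : M →ₗ[R] M) (u v : M) : M :=
  μ u (f v) - μ v (f u) - f (μ u v)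

section Wedge

variable {R : Type*} [CommRing R]

def wedge (u v : R × R) : R := u.1 * v.2 - v.1 * u.2

theorem Prod.eq_fst_smul_add_snd_smul (v : R × R) : v = v.1 • (1, 0) + v.2 • (0, 1) := by
  ext <;> simp

theorem LinearMap.apply_eq_fst_smul_add_snd_smul {M : Type*} [AddCommGroup M] [Module R M]
    (f : R × R →ₗ[R] M) (v : R × R) : f v = v.1 • f (1, 0) + v.2 • f (0, 1) := by
  conv_lhs => rw [v.eq_fst_smul_add_snd_smul]
  rw [map_add, map_smul, map_smul]

theorem LinearMap.eq_wedge_smul_of_apply_self {M : Type*} [AddCommGroup M] [Module R M]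
    (g : R × R →ₗ[R] R × R →ₗ[R] M) (hg : ∀ u, g u u = 0) (u v : R × R) :
    g u v = wedge u v • g (1, 0) (0, 1) := by
  have hswap : g (0, 1) (1, 0) = -g (1, 0) (0, 1) := by
    have h := hg ((1, 0) + (0, 1))
    simp only [map_add, add_apply, hg, zero_add, add_zero] at h
    exact eq_neg_of_add_eq_zero_left h
  rw [g.apply_eq_fst_smul_add_snd_smul u, add_apply, smul_apply, smul_apply,
    (g (1, 0)).apply_eq_fst_smul_add_snd_smul v, (g (0, 1)).apply_eq_fst_smul_add_snd_smul v]
  simp only [hg, hswap, wedge]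
  module

theorem LinearMap.trace_prod_self (f : R × R →ₗ[R] R × R) :
    trace R (R × R) f = (f (1, 0)).1 + (f (0, 1)).2 := by
  rw [trace_eq_matrix_trace R (Module.Basis.finTwoProd R), Matrix.trace_fin_two]
  simp [LinearMap.toMatrix_apply]

theorem wedge_apply_sub_wedge_apply (f : R × R →ₗ[R] R × R) (u v : R × R) :
    wedge u (f v) - wedge v (f u) = trace R (R × R) f * wedge u v := by
  rw [f.trace_prod_self, f.apply_eq_fst_smul_add_snd_smul u, f.apply_eq_fst_smul_add_snd_smul v]
  simp only [wedge, Prod.fst_add, Prod.snd_add, Prod.smul_fst, Prod.smul_snd, smul_eq_mul]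
  ring

theorem coboundary_wedge_smul (w : R × R) (f : R × R →ₗ[R] R × R) (u v : R × R) :
    coboundary (fun u v ↦ wedge u v • w) f u v = wedge u v • (trace R (R × R) f • w - f w) := by
  rw [coboundary, ← sub_smul, wedge_apply_sub_wedge_apply, map_smul, smul_sub, mul_smul, smul_comm]

end Wedge

theorem exists_trace_smul_sub_apply_eq {K : Type*} [Field K] {w : K × K} (hw : w ≠ 0)
    (c : K × K) : ∃ f : K × K →ₗ[K] K × K, trace K (K × K) f • w - f w = c := by
  obtain ⟨φ, hφ⟩ := Module.Projective.exists_dual_eq_one K hw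
  set A : K × K →ₗ[K] K × K := φ.smulRight c
  have htr : trace K (K × K) LinearMap.id = 2 := by
    rw [trace_prod_self]
    norm_num
  refine ⟨trace K (K × K) A • LinearMap.id - A, ?_⟩
  simp only [map_sub, map_smul, htr, smul_eq_mul, LinearMap.sub_apply, LinearMap.smul_apply,
    id_apply]
  have hA : A w = c := by simp [A, hφ]
  rw [hA]
  module

/-- For `x₀ ≠ 0` and
`μ_P (x,y) (x',y') = ((x*y'-x'*y)*x₀, (x*y'-x'*y)*y₀)`, every alternating
bilinear map `g : ℝ² × ℝ² → ℝ²` is of the form `δ¹f` for some linear map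
`f`; hence `H²_P(μ_P) = ker δ² / im δ¹` is trivial. -/
theorem H2_trivial (x₀ y₀ : ℝ) (hx₀ : x₀ ≠ 0)
    (μP : ℝ × ℝ → ℝ × ℝ → ℝ × ℝ)
    (hμ : ∀ u v : ℝ × ℝ,
      μP u v = ((u.1 * v.2 - v.1 * u.2) * x₀, (u.1 * v.2 - v.1 * u.2) * y₀)) :
    ∀ g : (ℝ × ℝ) →ₗ[ℝ] (ℝ × ℝ) →ₗ[ℝ] (ℝ × ℝ),
      (∀ u : ℝ × ℝ, g u u = 0) →
      ∃ f : (ℝ × ℝ) →ₗ[ℝ] (ℝ × ℝ), ∀ u v : ℝ × ℝ,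
        g u v = μP u (f v) - μP v (f u) - f (μP u v) := by
  intro g hg
  have hμP : μP = fun u v ↦ wedge u v • (x₀, y₀) := by
    ext u v <;> simp [hμ, wedge]
  have hw : ((x₀, y₀) : ℝ × ℝ) ≠ 0 := fun h ↦ hx₀ congr($h.1)
  obtain ⟨f, hf⟩ := exists_trace_smul_sub_apply_eq hw (g (1, 0) (0, 1))
  refine ⟨f, fun u v ↦ ?_⟩
  rw [g.eq_wedge_smul_of_apply_self hg, ← hf, ← coboundary_wedge_smul, hμP, coboundary]
end
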